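/- arXiv:2510.26914 — 4 statements merged into one kernel-verified Lean document; each statement's English description precedes it below -/
import Mathlib

section
/- If a forecast distribution function G is continuous and probabilistically calibrated for a real-valued random variable Y (i.e., P(G(Y) ≤ α) ≤ α ≤ P(G(Y−) < α) for all α ∈ (0,1)), then the probability integral transform G(Y) is uniformly distributed on [0,1]. -/
/-!
For continuous `G` the left limit `G(y−)` is `G(y)`, so the two calibration inequalities pinch
`P(G(Y) ≤ α) = α` for `α ∈ (0, 1)`. A monotone `[0, 1]`-valued function that is the identity on
`(0, 1)` must be the clamp `max 0 (min x 1)`; hence the CDF of `G(Y)` is that of the uniform law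
on `[0, 1]`, and a probability measure on `ℝ` is determined by its CDF.
-/

open MeasureTheory ProbabilityTheory Set Function Filter Topology

theorem leftLim_eq_of_continuousWithinAt {α β : Type*} [LinearOrder α] [TopologicalSpace α]
    [OrderTopology α] [TopologicalSpace β] [T2Space β] {f : α → β} {x : α}
    (hf : ContinuousWithinAt f (Iio x) x) : leftLim f x = f x := by
  rcases eq_or_neBot (𝓝[<] x) with h | h
  · exact leftLim_eq_of_eq_bot f h
  · exact leftLim_eq_of_tendsto hf.tendsto

theorem Monotone.eq_max_min_of_eqOn_id_Ioo {F : ℝ → ℝ} (hF : Monotone F) (h0 : ∀ x, 0 ≤ F x)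
    (h1 : ∀ x, F x ≤ 1) (hid : EqOn F id (Ioo 0 1)) : F = fun x ↦ max 0 (min x 1) := by
  funext x
  rcases le_or_gt x 0 with hx | hx
  · have hFx : F x ≤ 0 := le_of_forall_gt_imp_ge_of_dense fun a ha ↦ by
      have ha' : min a 2⁻¹ ∈ Ioo (0 : ℝ) 1 :=
        ⟨lt_min ha (by norm_num), (min_le_right _ _).trans_lt (by norm_num)⟩
      calc F x ≤ F (min a 2⁻¹) := hF (hx.trans ha'.1.le)
        _ = min a 2⁻¹ := hid ha'
        _ ≤ a := min_le_left _ _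
    have := h0 x
    rw [max_eq_left (min_le_of_left_le hx)]
    linarith
  rcases le_or_gt 1 x with hx1 | hx1
  · have hFx : 1 ≤ F x := le_of_forall_lt_imp_le_of_dense fun a ha ↦ by
      have ha' : max a 2⁻¹ ∈ Ioo (0 : ℝ) 1 :=
        ⟨(by norm_num : (0 : ℝ) < 2⁻¹).trans_le (le_max_right _ _), max_lt ha (by norm_num)⟩
      calc a ≤ max a 2⁻¹ := le_max_left _ _
        _ = F (max a 2⁻¹) := (hid ha').symm
        _ ≤ F x := hF (ha'.2.le.trans hx1)
    have := h1 x
    rw [min_eq_right hx1, max_eq_right zero_le_one]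
    linarith
  · rw [min_eq_left hx1.le, max_eq_right hx.le]
    exact hid ⟨hx, hx1⟩

instance isProbabilityMeasure_volume_restrict_Icc_zero_one :
    IsProbabilityMeasure (volume.restrict (Icc (0 : ℝ) 1)) :=
  ⟨by simp [Real.volume_Icc]⟩

theorem cdf_volume_restrict_Icc_zero_one {x : ℝ} (hx : x ∈ Ioo 0 1) :
    cdf (volume.restrict (Icc (0 : ℝ) 1)) x = x := by
  have hIcc : Iic x ∩ Icc 0 1 = Icc 0 x := by
    ext y
    simp only [mem_inter_iff, mem_Iic, mem_Icc]
    exact ⟨fun ⟨hyx, hy0, _⟩ ↦ ⟨hy0, hyx⟩, fun ⟨hy0, hyx⟩ ↦ ⟨hyx, hy0, hyx.trans hx.2.le⟩⟩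
  rw [cdf_eq_real, measureReal_restrict_apply measurableSet_Iic, hIcc,
    Real.volume_real_Icc_of_le hx.1.le, sub_zero]

theorem MeasureTheory.Measure.eq_volume_restrict_Icc_of_measure_Iic (μ : Measure ℝ)
    [IsProbabilityMeasure μ]
    (h : ∀ x ∈ Ioo (0 : ℝ) 1, μ (Iic x) = ENNReal.ofReal x) :
    μ = volume.restrict (Icc 0 1) := by
  have hcdf : EqOn (cdf μ) id (Ioo 0 1) := fun x hx ↦ by
    rw [id, ← ENNReal.ofReal_eq_ofReal_iff (cdf_nonneg μ x) hx.1.le, ofReal_cdf, h x hx]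
  refine Measure.eq_of_cdf _ _ (StieltjesFunction.ext fun x ↦ congrFun ?_ x)
  rw [(monotone_cdf μ).eq_max_min_of_eqOn_id_Ioo (cdf_nonneg μ) (cdf_le_one μ) hcdf,
    (monotone_cdf _).eq_max_min_of_eqOn_id_Ioo (cdf_nonneg _) (cdf_le_one _)
      fun x hx ↦ cdf_volume_restrict_Icc_zero_one hx]

theorem stmt_0_general {Ω : Type*} [MeasurableSpace Ω] (P : Measure Ω) [IsProbabilityMeasure P]
    (Y : Ω → ℝ) (hY : Measurable Y) (G : ℝ → ℝ)
    (hGcont : Continuous G)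
    (hcal : ∀ α ∈ Set.Ioo (0 : ℝ) 1,
      P {ω | G (Y ω) ≤ α} ≤ ENNReal.ofReal α ∧
      ENNReal.ofReal α ≤ P {ω | Function.leftLim G (Y ω) < α}) :
    Measure.map (fun ω => G (Y ω)) P = volume.restrict (Set.Icc (0 : ℝ) 1) := by
  have hPIT : Measurable fun ω ↦ G (Y ω) := hGcont.measurable.comp hY
  have : IsProbabilityMeasure (P.map fun ω ↦ G (Y ω)) :=
    Measure.isProbabilityMeasure_map hPIT.aemeasurable
  refine Measure.eq_volume_restrict_Icc_of_measure_Iic _ fun α hα ↦ ?_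
  rw [Measure.map_apply hPIT measurableSet_Iic]
  refine le_antisymm (hcal α hα).1 ((hcal α hα).2.trans (measure_mono fun ω hω ↦ ?_))
  have hω : leftLim G (Y ω) < α := hω
  rw [leftLim_eq_of_continuousWithinAt hGcont.continuousWithinAt] at hω
  exact hω.le

/-- If a continuous forecast distribution function `G` is probabilistically calibrated for
`Y`, then the probability integral transform `G(Y)` is uniformly distributed on `[0,1]`. -/
theorem stmt_0 {Ω : Type*} [MeasurableSpace Ω] (P : Measure Ω) [IsProbabilityMeasure P]
    (Y : Ω → ℝ) (hY : Measurable Y) (G : ℝ → ℝ)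
    (hGcont : Continuous G) (hGmono : Monotone G)
    (hGrange : ∀ y, G y ∈ Set.Icc (0 : ℝ) 1)
    (hcal : ∀ α ∈ Set.Ioo (0 : ℝ) 1,
      P {ω | G (Y ω) ≤ α} ≤ ENNReal.ofReal α ∧
      ENNReal.ofReal α ≤ P {ω | Function.leftLim G (Y ω) < α}) :
    Measure.map (fun ω => G (Y ω)) P = volume.restrict (Set.Icc (0 : ℝ) 1) :=
  stmt_0_general P Y hY G hGcont hcal
end

section
/- Let ŷ : 𝒳 → ℝ be any function, (x₁,y₁),…,(xₙ,yₙ) ∈ 𝒳 × ℝ, and define residuals ε̂ᵢ = yᵢ − ŷ(xᵢ). Define the residual-distribution forecasting procedure G_x(y) = (1/n)∑ᵢ 1{ŷ(x) + ε̂ᵢ ≤ y}. Then G is in-sample probabilistically calibrated: for the empirical measure P̂ₙ on the n pairs, P̂ₙ(G_{Xᵢ}(Yᵢ) ≤ α) ≤ α ≤ P̂ₙ(G_{Xᵢ}(Yᵢ−) < α) for all α ∈ (0,1). -/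
/-!
Since `y i = ŷ (x i) + ε i`, the value `G (x i) (y i)` is the normalized rank `#{j | ε j ≤ ε i} / n`
and its left limit the normalized strict rank `#{j | ε j < ε i} / n`. Both inequalities are then
counting facts about ranks of finitely many reals: if every index of a set has rank at most `a`,
then so does the one with the largest value, and the set lies below it, so it has at most `a`
elements; dually, the indices of strict rank at least `a` lie above the one with the smallest
value, so at most `n - a` of them exist.
-/

open Finset Filter Topology Function

section Rank

variable {ι β : Type*} [Fintype ι] [LinearOrder β] (f : ι → β)

theorem card_filter_card_le_le {a : ℝ} (ha : 0 ≤ a) :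
    (#{i | (#{j | f j ≤ f i} : ℝ) ≤ a} : ℝ) ≤ a := by
  set S : Finset ι := {i | (#{j | f j ≤ f i} : ℝ) ≤ a}
  obtain hS | hS := S.eq_empty_or_nonempty
  · simpa [hS] using ha
  obtain ⟨i₀, hi₀, hmax⟩ := exists_max_image S f hS
  calc (#S : ℝ) ≤ #{j | f j ≤ f i₀} := by
        exact_mod_cast card_le_card fun i hi => mem_filter.2 ⟨mem_univ i, hmax i hi⟩
    _ ≤ a := (mem_filter.1 hi₀).2

theorem le_card_filter_card_lt_lt {a : ℝ} (ha : a ≤ Fintype.card ι) :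
    a ≤ #{i | (#{j | f j < f i} : ℝ) < a} := by
  set T : Finset ι := {i | ¬ (#{j | f j < f i} : ℝ) < a}
  have hsplit : (#{i | (#{j | f j < f i} : ℝ) < a} : ℝ) + #T = Fintype.card ι := by
    exact_mod_cast card_filter_add_card_filter_not _
  suffices (#T : ℝ) ≤ Fintype.card ι - a by linarith
  obtain hT | hT := T.eq_empty_or_nonempty
  · simpa [hT] using ha
  obtain ⟨i₀, hi₀, hmin⟩ := exists_min_image T f hT
  have hcompl : (#{j | f j < f i₀} : ℝ) + #{j | ¬ f j < f i₀} = Fintype.card ι := by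
    exact_mod_cast card_filter_add_card_filter_not _
  have hrank : a ≤ #{j | f j < f i₀} := not_lt.1 (mem_filter.1 hi₀).2
  have hsub : (#T : ℝ) ≤ #{j | ¬ f j < f i₀} := by
    exact_mod_cast card_le_card fun i hi => mem_filter.2 ⟨mem_univ i, not_lt.2 (hmin i hi)⟩
  linarith

end Rank

theorem eventually_filter_le_eq_filter_lt {ι α : Type*} [Fintype ι] [LinearOrder α]
    [TopologicalSpace α] [OrderTopology α] (g : ι → α) (b : α) :
    ∀ᶠ t in 𝓝[<] b, ({j | g j ≤ t} : Finset ι) = ({j | g j < b} : Finset ι) := by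
  have hpt : ∀ j, ∀ᶠ t in 𝓝[<] b, (g j ≤ t ↔ g j < b) := by
    intro j
    rcases lt_or_ge (g j) b with hlt | hge
    · filter_upwards [nhdsWithin_le_nhds (Ioi_mem_nhds hlt)] with t ht
      exact iff_of_true (le_of_lt ht) hlt
    · filter_upwards [self_mem_nhdsWithin] with t ht
      exact iff_of_false (not_le.2 (lt_of_lt_of_le ht hge)) (not_lt.2 hge)
  filter_upwards [eventually_all.2 hpt] with t ht
  ext j
  simp [ht j]

theorem leftLim_eq_of_eventually_eq {α β : Type*} [LinearOrder α] [TopologicalSpace α]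
    [OrderTopology α] [TopologicalSpace β] [T2Space β] {f : α → β} {a : α} {b : β}
    [(𝓝[<] a).NeBot] (h : ∀ᶠ t in 𝓝[<] a, f t = b) :
    leftLim f a = b :=
  leftLim_eq_of_tendsto (tendsto_const_nhds.congr' (h.mono fun _ ht => ht.symm))

open Classical in
/-- The residual-distribution forecasting procedure is in-sample probabilistically
calibrated with respect to the empirical measure of the training pairs. -/
theorem stmt_2 {X : Type*} (n : ℕ) (hn : 0 < n) (x : Fin n → X) (y : Fin n → ℝ)
    (yhat : X → ℝ) (ε : Fin n → ℝ) (hε : ∀ i, ε i = y i - yhat (x i))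
    (G : X → ℝ → ℝ)
    (hG : ∀ x' t, G x' t = ((Finset.univ.filter fun i => yhat x' + ε i ≤ t).card : ℝ) / n)
    (α : ℝ) (hα : α ∈ Set.Ioo (0 : ℝ) 1) :
    ((Finset.univ.filter fun i => G (x i) (y i) ≤ α).card : ℝ) / n ≤ α ∧
    α ≤ ((Finset.univ.filter fun i => Function.leftLim (G (x i)) (y i) < α).card : ℝ) / n := by
  have hn' : (0 : ℝ) < n := by exact_mod_cast hn
  have hy : ∀ i, y i = yhat (x i) + ε i := fun i => by rw [hε]; ring
  have hG_at : ∀ i, G (x i) (y i) = #{j | ε j ≤ ε i} / n := fun i => by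
    simp only [hG, hy, add_le_add_iff_left]
  have hG_left : ∀ i, leftLim (G (x i)) (y i) = #{j | ε j < ε i} / n := fun i => by
    refine leftLim_eq_of_eventually_eq ?_
    filter_upwards [eventually_filter_le_eq_filter_lt (fun j => yhat (x i) + ε j) (y i)] with t ht
    rw [hG, ht]
    simp only [hy, add_lt_add_iff_left]
  constructor
  · simp only [hG_at, div_le_iff₀ hn']
    exact card_filter_card_le_le ε (mul_nonneg hα.1.le hn'.le)
  · simp only [hG_left, div_lt_iff₀ hn', le_div_iff₀ hn']
    exact le_card_filter_card_lt_lt ε (by simpa using mul_le_of_le_one_left hn'.le hα.2.le)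
end

section
/- For the exponential-kernel density regression ŷ'ᵢ = (∑_{j=1}^{n} exp(−‖xᵢ − xⱼ‖) yⱼ + exp(−‖xᵢ − x_{n+1}‖) y') / ∑_{j=1}^{n+1} exp(−‖xᵢ − xⱼ‖), the difference ŷ'_{n+1} − ŷ'ᵢ is a weakly increasing function of y' for every i = 1,…,n. -/
/-- For exponential-kernel density regression, the prediction difference
`ŷ'_{n+1} − ŷ'ᵢ` is a weakly increasing function of the augmented outcome `y'`. -/
theorem stmt_14 {X : Type*} [MetricSpace X] (n : ℕ) (x : Fin (n + 1) → X)
    (ys : Fin n → ℝ) (yhat : Fin (n + 1) → ℝ → ℝ)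
    (hyhat : ∀ i y', yhat i y' =
      ((∑ j : Fin n, Real.exp (-(dist (x i) (x j.castSucc))) * ys j) +
        Real.exp (-(dist (x i) (x (Fin.last n)))) * y') /
      (∑ j : Fin (n + 1), Real.exp (-(dist (x i) (x j))))) :
    ∀ i : Fin n, Monotone (fun y' => yhat (Fin.last n) y' - yhat i.castSucc y') := by
  intro i a b hab
  simp only [hyhat]
  set l := Fin.last n with hl
  have hS : ∀ k : Fin (n+1), 0 < ∑ j : Fin (n+1), Real.exp (-(dist (x k) (x j))) :=
    fun k => Finset.sum_pos (fun j _ => Real.exp_pos _) ⟨l, Finset.mem_univ _⟩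
  have key : Real.exp (-(dist (x i.castSucc) (x l))) *
      (∑ j : Fin (n+1), Real.exp (-(dist (x l) (x j)))) ≤
      ∑ j : Fin (n+1), Real.exp (-(dist (x i.castSucc) (x j))) := by
    rw [Finset.mul_sum]
    refine Finset.sum_le_sum fun j _ => ?_
    rw [← Real.exp_add]
    apply Real.exp_le_exp.2
    have := dist_triangle (x i.castSucc) (x l) (x j)
    linarith
  have hcoef : Real.exp (-(dist (x i.castSucc) (x l))) /
      (∑ j : Fin (n+1), Real.exp (-(dist (x i.castSucc) (x j)))) ≤
      Real.exp (-(dist (x l) (x l))) /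
      (∑ j : Fin (n+1), Real.exp (-(dist (x l) (x j)))) := by
    rw [dist_self, neg_zero, Real.exp_zero]
    rw [div_le_div_iff₀ (hS _) (hS _)]
    nlinarith [key]
  have h := mul_le_mul_of_nonneg_left hcoef (sub_nonneg.2 hab)
  rw [add_div, add_div, add_div, add_div]
  rw [dist_self, neg_zero, Real.exp_zero] at h ⊢
  have e1 : ∀ c : ℝ, Real.exp (-(dist (x i.castSucc) (x l))) * c /
      (∑ j : Fin (n+1), Real.exp (-(dist (x i.castSucc) (x j)))) =
      c * (Real.exp (-(dist (x i.castSucc) (x l))) /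
      (∑ j : Fin (n+1), Real.exp (-(dist (x i.castSucc) (x j))))) := fun c => by ring
  have e2 : ∀ c : ℝ, (1 : ℝ) * c /
      (∑ j : Fin (n+1), Real.exp (-(dist (x l) (x j)))) =
      c * ((1:ℝ) / (∑ j : Fin (n+1), Real.exp (-(dist (x l) (x j))))) := fun c => by ring
  rw [e1, e1, e2, e2]
  nlinarith [h]
end

section
/- Suppose (Π_ℓ, Π_u) is a predictive system containing an out-of-sample probabilistically calibrated forecast in the sense that P(Π_ℓ(Y) ≤ α) ≤ α ≤ P(Π_u(Y−) < α) for all α ∈ (0,1). For α ∈ (0,1), let L be the (α/2)-quantile of Π_u and R the (1 − α/2)-quantile of Π_ℓ, assumed to exist, i.e. Π_u(L−) ≤ α/2 ≤ Π_u(L) and Π_ℓ(R−) ≤ 1 − α/2 ≤ Π_ℓ(R). Then P(L ≤ Y ≤ R) ≥ 1 − α. -/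
open MeasureTheory Filter in
/-- Prediction intervals derived from a calibrated predictive system achieve coverage
at least `1 − α`. -/
theorem stmt_17 {Ω : Type*} [MeasurableSpace Ω] (P : Measure Ω) [IsProbabilityMeasure P]
    (Y : Ω → ℝ) (hY : Measurable Y)
    (Pl Pu : ℝ → ℝ) (hlmono : Monotone Pl) (humono : Monotone Pu)
    (hlrange : ∀ y, Pl y ∈ Set.Icc (0 : ℝ) 1) (hurange : ∀ y, Pu y ∈ Set.Icc (0 : ℝ) 1)
    (hle : ∀ y, Pl y ≤ Pu y)
    (hlim_l : Tendsto Pl atBot (nhds 0)) (hlim_u : Tendsto Pu atTop (nhds 1))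
    (hcal : ∀ α ∈ Set.Ioo (0 : ℝ) 1,
      P {ω | Pl (Y ω) ≤ α} ≤ ENNReal.ofReal α ∧
      ENNReal.ofReal α ≤ P {ω | Function.leftLim Pu (Y ω) < α})
    (α : ℝ) (hα : α ∈ Set.Ioo (0 : ℝ) 1) (L R : ℝ)
    (hL : Function.leftLim Pu L ≤ α / 2 ∧ α / 2 ≤ Pu L)
    (hR : Function.leftLim Pl R ≤ 1 - α / 2 ∧ 1 - α / 2 ≤ Pl R) :
    ENNReal.ofReal (1 - α) ≤ P {ω | L ≤ Y ω ∧ Y ω ≤ R} := by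
  obtain ⟨hα0, hα1⟩ := hα
  -- Left tail: P(Y < L) ≤ α/2
  have h1 : P {ω | Y ω < L} ≤ ENNReal.ofReal (α / 2) := by
    refine le_trans (measure_mono ?_) ((hcal (α / 2) ⟨by linarith, by linarith⟩).1)
    intro ω hω
    exact le_trans (hle _) (le_trans (humono.le_leftLim hω) hL.1)
  -- Right tail: P(Y ≤ R) ≥ 1 - α/2
  have h2 : ENNReal.ofReal (1 - α / 2) ≤ P {ω | Y ω ≤ R} := by
    refine le_trans ((hcal (1 - α / 2) ⟨by linarith, by linarith⟩).2) (measure_mono ?_)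
    intro ω hω
    by_contra hc
    simp only [Set.mem_setOf_eq, not_le] at hc
    have : Pu R ≤ Function.leftLim Pu (Y ω) := humono.le_leftLim hc
    have : (1 : ℝ) - α / 2 ≤ Function.leftLim Pu (Y ω) :=
      le_trans hR.2 (le_trans (hle R) this)
    exact absurd hω (not_lt.mpr this)
  -- {Y ≤ R} ⊆ {L ≤ Y ≤ R} ∪ {Y < L}
  have hsub : {ω | Y ω ≤ R} ⊆ {ω | L ≤ Y ω ∧ Y ω ≤ R} ∪ {ω | Y ω < L} := by
    intro ω hω
    rcases le_or_gt L (Y ω) with h | h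
    · exact Or.inl ⟨h, hω⟩
    · exact Or.inr h
  have key : ENNReal.ofReal (1 - α / 2) ≤
      P {ω | L ≤ Y ω ∧ Y ω ≤ R} + ENNReal.ofReal (α / 2) :=
    le_trans h2 (le_trans (measure_mono hsub)
      (le_trans (measure_union_le _ _) (add_le_add le_rfl h1)))
  have heq : ENNReal.ofReal (1 - α) =
      ENNReal.ofReal (1 - α / 2) - ENNReal.ofReal (α / 2) := by
    rw [← ENNReal.ofReal_sub _ (by linarith)]
    ring_nf
  rw [heq]
  exact tsub_le_iff_right.mpr key
end
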